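/- Let q ≥ 2 be an integer, let G be a partially q-colored graph with a free vertex v, and let w ∈ [0,1] be such that Z_{G^{+1}}(w) > 0 and Z_{G^{+q}}(w) > 0. Then: (i) P_{G^{+1},w}[Φ(v)=1] ≤ P_{G^{+q},w}[Φ(v)=1]; (ii) P_{G^{+1},w}[Φ(v)=q] ≥ P_{G^{+q},w}[Φ(v)=q]; and (iii) if moreover Z^1_{G,v}(w) ≤ Z^q_{G,v}(w), then P_{G^{+1},w}[Φ(v)=q] − P_{G^{+q},w}[Φ(v)=q] ≤ (1−w)·P_{G^{+1},w}[Φ(v)=q]. -/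

import Mathlib

attribute [local instance 10] Classical.propDecidable

noncomputable section

/-- A partially `q`-colored graph: a finite simple graph together with a set `S` of
pinned vertices and a pinning `pin` (only its values on `S` are relevant). -/
structure PCG (q : ℕ) where
  V : Type
  fin : Fintype V
  G : SimpleGraph V
  S : Finset V
  pin : V → Fin q

namespace PCG

variable {q : ℕ}

instance (H : PCG q) : Fintype H.V := H.fin

/-- colorings agreeing with the pinning on the pinned set -/
def admissible (H : PCG q) (ψ : H.V → Fin q) : Prop :=
  ∀ u ∈ H.S, ψ u = H.pin u

/-- the number of monochromatic edges of a coloring -/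
def mono (H : PCG q) (ψ : H.V → Fin q) : ℕ :=
  ((Finset.univ : Finset (Sym2 H.V)).filter
    (fun e => e ∈ H.G.edgeSet ∧ (e.map ψ).IsDiag)).card

/-- the (complex) Potts partition function of a partially colored graph -/
def Z (H : PCG q) (w : ℂ) : ℂ :=
  ∑ ψ ∈ Finset.univ.filter (fun ψ : H.V → Fin q => H.admissible ψ), w ^ H.mono ψ

/-- the partition function restricted to colorings giving `v` the color `j` -/
def Zc (H : PCG q) (v : H.V) (j : Fin q) (w : ℂ) : ℂ :=
  ∑ ψ ∈ Finset.univ.filter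
      (fun ψ : H.V → Fin q => H.admissible ψ ∧ ψ v = j), w ^ H.mono ψ

/-- the real Potts partition function -/
def Zr (H : PCG q) (w : ℝ) : ℝ :=
  ∑ ψ ∈ Finset.univ.filter (fun ψ : H.V → Fin q => H.admissible ψ), w ^ H.mono ψ

/-- the real partition function restricted to colorings giving `v` the color `j` -/
def Zcr (H : PCG q) (v : H.V) (j : Fin q) (w : ℝ) : ℝ :=
  ∑ ψ ∈ Finset.univ.filter
      (fun ψ : H.V → Fin q => H.admissible ψ ∧ ψ v = j), w ^ H.mono ψ

/-- the marginal probability that `v` receives the color `j` -/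
def Pr (H : PCG q) (v : H.V) (j : Fin q) (w : ℝ) : ℝ :=
  H.Zcr v j w / H.Zr w

/-- the neighborhood of a vertex -/
def nbhd (H : PCG q) (v : H.V) : Finset H.V :=
  Finset.univ.filter (fun u => H.G.Adj v u)

/-- the degree of a vertex -/
def deg (H : PCG q) (v : H.V) : ℕ := (H.nbhd v).card

/-- the free degree of a vertex: its number of free neighbors -/
def freeDeg (H : PCG q) (v : H.V) : ℕ :=
  ((H.nbhd v).filter (fun u => u ∉ H.S)).card

/-- the number of pinned neighbors of `v` colored `j` -/
def cvec (H : PCG q) (v : H.V) (j : Fin q) : ℕ :=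
  ((H.nbhd v).filter (fun u => u ∈ H.S ∧ H.pin u = j)).card

/-- the color `j` is blocked at `v`: some pinned neighbor of `v` is colored `j` -/
def blockedAt (H : PCG q) (v : H.V) (j : Fin q) : Prop :=
  ∃ u ∈ H.nbhd v, u ∈ H.S ∧ H.pin u = j

/-- the set of colors that are free at `v` -/
def freeColors (H : PCG q) (v : H.V) : Finset (Fin q) :=
  Finset.univ.filter (fun j => ¬ H.blockedAt v j)

/-- the graph has maximum degree at most `Δ` -/
def maxDegLE (H : PCG q) (Δ : ℕ) : Prop := ∀ u, H.deg u ≤ Δ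

/-- the class 𝒢•: `H` is connected, has max degree at most `Δ`, its pinned vertices
are leaves and form an independent set, and `v` is a free vertex -/
def GoodPair (Δ : ℕ) (H : PCG q) (v : H.V) : Prop :=
  H.G.Connected ∧ H.maxDegLE Δ ∧ (∀ u ∈ H.S, H.deg u = 1) ∧
    (∀ u ∈ H.S, ∀ u' ∈ H.S, ¬ H.G.Adj u u') ∧ v ∉ H.S

/-- `Ḡ`: the graph obtained by deleting all pinned neighbors of `v` -/
def bar (H : PCG q) (v : H.V) : PCG q where
  V := ↥{u : H.V | ¬(u ∈ H.S ∧ H.G.Adj v u)}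
  fin := inferInstance
  G := H.G.induce {u : H.V | ¬(u ∈ H.S ∧ H.G.Adj v u)}
  S := Finset.univ.filter (fun u => u.1 ∈ H.S)
  pin := fun u => H.pin u.1

/-- the vertex `v` viewed as a vertex of `Ḡ` -/
def barVert (H : PCG q) (v : H.V) : (H.bar v).V :=
  ⟨v, fun h => H.G.loopless.irrefl v h.2⟩

/-- `G − v`: the graph obtained by deleting the vertex `v` -/
def deleteVert (H : PCG q) (v : H.V) : PCG q where
  V := ↥{u : H.V | u ≠ v}
  fin := inferInstance
  G := H.G.induce {u : H.V | u ≠ v}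
  S := Finset.univ.filter (fun u => u.1 ∈ H.S)
  pin := fun u => H.pin u.1

/-- `G^{+ℓ}`: attach a new pinned leaf of color `ℓ` to the vertex `v` -/
def addLeaf (H : PCG q) (v : H.V) (ℓ : Fin q) : PCG q where
  V := Option H.V
  fin := inferInstance
  G := SimpleGraph.fromRel (fun a b =>
    (∃ u u' : H.V, a = some u ∧ b = some u' ∧ H.G.Adj u u') ∨ (a = none ∧ b = some v))
  S := insert none (H.S.image some)
  pin := fun a => a.elim ℓ H.pin

/-- the complex log-ratio `R_{G,v;i,j}` -/
def logRatio (H : PCG q) (v : H.V) (i j : Fin q) (w : ℂ) : ℂ :=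
  Complex.log (H.Zc v i w / H.Zc v j w)

/-- the vector `P_{G,v}(w) ∈ ℝ^{q−1}` of marginal differences -/
def Pvec (H : PCG q) (v : H.V) (w : ℝ) (j : Fin (q - 1)) : ℝ :=
  (H.addLeaf v ⟨0, by have := j.2; omega⟩).Pr (some v) (Fin.castLE (Nat.sub_le q 1) j) w -
  (H.addLeaf v ⟨q - 1, by have := j.2; omega⟩).Pr (some v) (Fin.castLE (Nat.sub_le q 1) j) w

/-- the graph `Ĝ_i` of the telescoping procedure: delete `v` from `G`, attach to the
`j`-th neighbor of `v` (for `j ≠ i`) a pinned leaf colored `ℓ₂` if `j < i` and `ℓ₁`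
if `j > i`, and attach a free leaf (the vertex `Sum.inr i`) to the `i`-th neighbor. -/
def telescope (H : PCG q) (v : H.V) {d : ℕ} (nbrs : Fin d → H.V)
    (ℓ₁ ℓ₂ : Fin q) (i : Fin d) : PCG q where
  V := ↥{u : H.V | u ≠ v} ⊕ Fin d
  fin := inferInstance
  G := SimpleGraph.fromRel (fun a b =>
    (∃ u u' : ↥{u : H.V | u ≠ v}, a = Sum.inl u ∧ b = Sum.inl u' ∧ H.G.Adj u.1 u'.1) ∨
    (∃ (u : ↥{u : H.V | u ≠ v}) (j : Fin d), a = Sum.inl u ∧ b = Sum.inr j ∧ u.1 = nbrs j))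
  S := (Finset.univ.filter (fun u : ↥{u : H.V | u ≠ v} => u.1 ∈ H.S)).image Sum.inl ∪
       (Finset.univ.filter (fun j : Fin d => j ≠ i)).image Sum.inr
  pin := Sum.elim (fun u => H.pin u.1) (fun j => if (j : ℕ) < (i : ℕ) then ℓ₂ else ℓ₁)

end PCG

/-- extend a vector indexed by `Fin (q-1)` to `Fin q` by a zero last coordinate -/
def extendLast (q : ℕ) (x : Fin (q - 1) → ℂ) : Fin q → ℂ :=
  fun j => if h : (j : ℕ) < q - 1 then x ⟨j, h⟩ else 0

/-- the polynomial `P_c(w,x) = w^{c₁+1}e^{x₁} + Σ_{j=2}^{q−1} w^{c_j}e^{x_j} + w^{c_q}` -/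
def Ppoly (q : ℕ) (c : Fin q → ℕ) (w : ℂ) (x : Fin (q - 1) → ℂ) : ℂ :=
  ∑ j : Fin q, w ^ (c j + if (j : ℕ) = 0 then 1 else 0) * Complex.exp (extendLast q x j)

/-- the polynomial `Q_c(w,x) = w^{c₁}e^{x₁} + Σ_{j=2}^{q−1} w^{c_j}e^{x_j} + w^{c_q+1}` -/
def Qpoly (q : ℕ) (c : Fin q → ℕ) (w : ℂ) (x : Fin (q - 1) → ℂ) : ℂ :=
  ∑ j : Fin q, w ^ (c j + if (j : ℕ) = q - 1 then 1 else 0) * Complex.exp (extendLast q x j)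

/-- the map `F_{w,c}(x) = Log (P_c(w,x)/Q_c(w,x))` -/
def Fmap (q : ℕ) (c : Fin q → ℕ) (w : ℂ) (x : Fin (q - 1) → ℂ) : ℂ :=
  Complex.log (Ppoly q c w x / Qpoly q c w x)

/-- real version of `extendLast` -/
def extendLastR (q : ℕ) (x : Fin (q - 1) → ℝ) : Fin q → ℝ :=
  fun j => if h : (j : ℕ) < q - 1 then x ⟨j, h⟩ else 0

/-- real version of `Ppoly` -/
def PpolyR (q : ℕ) (c : Fin q → ℕ) (w : ℝ) (x : Fin (q - 1) → ℝ) : ℝ :=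
  ∑ j : Fin q, w ^ (c j + if (j : ℕ) = 0 then 1 else 0) * Real.exp (extendLastR q x j)

/-- real version of `Qpoly` -/
def QpolyR (q : ℕ) (c : Fin q → ℕ) (w : ℝ) (x : Fin (q - 1) → ℝ) : ℝ :=
  ∑ j : Fin q, w ^ (c j + if (j : ℕ) = q - 1 then 1 else 0) * Real.exp (extendLastR q x j)

/-- real version of `Fmap`, i.e. `F_{w,c}` viewed as a real function on `ℝ^{q−1}` -/
def FmapR (q : ℕ) (c : Fin q → ℕ) (w : ℝ) (x : Fin (q - 1) → ℝ) : ℝ :=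
  Real.log (PpolyR q c w x / QpolyR q c w x)


/-!
Attaching to `v` a pinned leaf of color `ℓ` multiplies the weight of a coloring by `w` exactly
when `ψ v = ℓ`. Hence `Z^j_{G^{+ℓ},v} = w^{[j = ℓ]} Z^j_{G,v}` and
`Z_{G^{+ℓ}} = Z_G - (1 - w) Z^ℓ_{G,v}`, so all marginals of `v` in `G^{+1}` and `G^{+q}` are
explicit rational functions of `Z_G`, `Z^1_{G,v}` and `Z^q_{G,v}`, and the three inequalities become
elementary inequalities between them.
-/

open Finset Function SimpleGraph

section MonoEdges
variable {V W α : Type*} [Fintype V] [Fintype W]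

def monoEdges [DecidableEq α] (G : SimpleGraph V) (ψ : V → α) : Finset (Sym2 V) :=
  univ.filter fun e => e ∈ G.edgeSet ∧ (e.map ψ).IsDiag

lemma monoEdges_sup [DecidableEq V] [DecidableEq α] (G₁ G₂ : SimpleGraph V) (ψ : V → α) :
    monoEdges (G₁ ⊔ G₂) ψ = monoEdges G₁ ψ ∪ monoEdges G₂ ψ := by
  ext e
  simp only [monoEdges, mem_union, mem_filter, mem_univ, true_and, edgeSet_sup, Set.mem_union]
  tauto

lemma monoEdges_map [DecidableEq α] (f : V ↪ W) (G : SimpleGraph V) (ψ : W → α) :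
    monoEdges (G.map f) ψ = (monoEdges G (ψ ∘ f)).map f.sym2Map := by
  ext e
  simp only [monoEdges, mem_map, mem_filter, mem_univ, true_and, edgeSet_map, Set.mem_image]
  constructor
  · rintro ⟨⟨a, ha, rfl⟩, hd⟩
    exact ⟨a, ⟨ha, by simpa [Sym2.map_map] using hd⟩, rfl⟩
  · rintro ⟨a, ⟨ha, hd⟩, rfl⟩
    exact ⟨⟨a, ha, rfl⟩, by simpa [Sym2.map_map] using hd⟩

lemma monoEdges_edge [DecidableEq α] {x y : V} (hxy : x ≠ y) (ψ : V → α) :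
    monoEdges (edge x y) ψ = if ψ x = ψ y then {s(x, y)} else ∅ := by
  ext e
  simp only [monoEdges, mem_filter, mem_univ, true_and, edgeSet_edge_of_ne hxy,
    Set.mem_singleton_iff]
  split_ifs with h
  · simp only [mem_singleton, and_iff_left_iff_imp]
    rintro rfl
    simpa using h
  · simp only [notMem_empty, iff_false, not_and]
    rintro rfl
    simpa using h

lemma card_monoEdges_map_some_sup_edge [DecidableEq V] [DecidableEq α] (G : SimpleGraph V) (v : V)
    (c : α) (ψ : V → α) :
    #(monoEdges (G.map Embedding.some ⊔ edge none (some v)) (fun a => a.elim c ψ)) =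
      #(monoEdges G ψ) + if ψ v = c then 1 else 0 := by
  have hrestrict : (fun a => a.elim c ψ) ∘ Embedding.some = ψ := rfl
  rw [monoEdges_sup, monoEdges_map, hrestrict, card_union_of_disjoint, card_map,
    monoEdges_edge (Option.some_ne_none v).symm]
  · by_cases h : ψ v = c
    · simp [h]
    · simp [h, Ne.symm h]
  · rw [monoEdges_edge (Option.some_ne_none v).symm]
    split_ifs
    · rw [disjoint_singleton_right, mem_map]
      rintro ⟨e, -, he⟩
      simpa [Embedding.sym2Map_apply] using congrArg (none ∈ ·) he
    · exact disjoint_empty_right _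

end MonoEdges

namespace PCG
variable {q : ℕ}

lemma mono_eq_card_monoEdges (H : PCG q) (ψ : H.V → Fin q) : H.mono ψ = #(monoEdges H.G ψ) :=
  rfl

section addLeaf
variable (H : PCG q) (v : H.V) (ℓ : Fin q)

lemma addLeaf_G : (H.addLeaf v ℓ).G = H.G.map Embedding.some ⊔ edge none (some v) := by
  refine SimpleGraph.ext (funext₂ fun (a b : Option H.V) => propext ?_)
  cases a <;> cases b <;> simp [addLeaf, edge_adj, map_adj', eq_comm]
  exact fun _ h => h.symm

lemma addLeaf_mono (c : Fin q) (ψ : H.V → Fin q) :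
    (H.addLeaf v ℓ).mono (fun a => a.elim c ψ) = H.mono ψ + if ψ v = c then 1 else 0 := by
  rw [mono_eq_card_monoEdges, mono_eq_card_monoEdges, addLeaf_G]
  exact card_monoEdges_map_some_sup_edge H.G v c ψ

lemma addLeaf_admissible_iff (ψ : Option H.V → Fin q) :
    (H.addLeaf v ℓ).admissible ψ ↔ ψ none = ℓ ∧ H.admissible (fun u => ψ (some u)) := by
  show (∀ a ∈ insert none (H.S.image some), ψ a = a.elim ℓ H.pin) ↔ _
  simp [admissible]

lemma addLeaf_Zcr (j : Fin q) (w : ℝ) :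
    (H.addLeaf v ℓ).Zcr (some v) j w = (if j = ℓ then w else 1) * H.Zcr v j w := by
  simp only [Zcr]
  rw [mul_sum, eq_comm]
  refine sum_nbij' (fun ψ a => a.elim ℓ ψ) (fun ψ u => ψ (some u)) ?_ ?_ ?_ ?_ ?_
  all_goals simp only [mem_filter, mem_univ, true_and]
  · rintro ψ ⟨hψ, hv⟩
    exact ⟨(H.addLeaf_admissible_iff v ℓ _).2 ⟨rfl, hψ⟩, hv⟩
  · rintro ψ ⟨hψ, hv⟩
    exact ⟨((H.addLeaf_admissible_iff v ℓ ψ).1 hψ).2, hv⟩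
  · intro ψ _
    rfl
  · rintro ψ ⟨hψ, -⟩
    funext a
    cases a
    · exact ((H.addLeaf_admissible_iff v ℓ ψ).1 hψ).1.symm
    · rfl
  · rintro ψ ⟨-, rfl⟩
    rw [addLeaf_mono, pow_add, mul_comm]
    split_ifs <;> simp

end addLeaf

lemma Zr_eq_sum_Zcr (H : PCG q) (v : H.V) (w : ℝ) : H.Zr w = ∑ j, H.Zcr v j w := by
  rw [Zr, ← sum_fiberwise _ (fun ψ => ψ v)]
  simp only [Zcr, filter_filter]

lemma Zcr_nonneg (H : PCG q) (v : H.V) (j : Fin q) {w : ℝ} (hw : 0 ≤ w) : 0 ≤ H.Zcr v j w :=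
  sum_nonneg fun _ _ => pow_nonneg hw _

lemma Zcr_le_Zr (H : PCG q) (v : H.V) (j : Fin q) {w : ℝ} (hw : 0 ≤ w) :
    H.Zcr v j w ≤ H.Zr w := by
  rw [H.Zr_eq_sum_Zcr v]
  exact single_le_sum (fun i _ => H.Zcr_nonneg v i hw) (mem_univ j)

lemma addLeaf_Zr (H : PCG q) (v : H.V) (ℓ : Fin q) (w : ℝ) :
    (H.addLeaf v ℓ).Zr w = H.Zr w - (1 - w) * H.Zcr v ℓ w := by
  have hsplit : ∀ j, (if j = ℓ then w else 1) * H.Zcr v j w =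
      H.Zcr v j w - if j = ℓ then (1 - w) * H.Zcr v j w else 0 := by
    intro j
    split_ifs <;> ring
  rw [Zr_eq_sum_Zcr (H.addLeaf v ℓ) (some v), Zr_eq_sum_Zcr H v]
  simp only [addLeaf_Zcr, hsplit, sum_sub_distrib, sum_ite_eq', mem_univ, if_true]

lemma addLeaf_Pr (H : PCG q) (v : H.V) (ℓ j : Fin q) (w : ℝ) :
    (H.addLeaf v ℓ).Pr (some v) j w =
      (if j = ℓ then w else 1) * H.Zcr v j w / (H.Zr w - (1 - w) * H.Zcr v ℓ w) := by
  simp only [Pr, addLeaf_Zcr, addLeaf_Zr]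

end PCG

lemma mul_div_sub_le_div_sub {A a b w : ℝ} (hw0 : 0 ≤ w) (hw1 : w ≤ 1) (ha : 0 ≤ a)
    (hb : 0 ≤ b) (haA : a ≤ A) (ha' : 0 < A - (1 - w) * a) (hb' : 0 < A - (1 - w) * b) :
    w * a / (A - (1 - w) * a) ≤ a / (A - (1 - w) * b) := by
  rw [div_le_div_iff₀ ha' hb']
  have hslack : 0 ≤ A - a + w * b := by linarith [mul_nonneg hw0 hb]
  nlinarith [mul_nonneg (mul_nonneg ha (sub_nonneg.2 hw1)) hslack]

lemma div_sub_mul_div_le {A a b w : ℝ} (hw0 : 0 ≤ w) (hw1 : w ≤ 1) (hb : 0 ≤ b)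
    (hab : a ≤ b) (hb' : 0 < A - (1 - w) * b) :
    b / (A - (1 - w) * a) - w * b / (A - (1 - w) * b) ≤ (1 - w) * (b / (A - (1 - w) * a)) := by
  have hden : A - (1 - w) * b ≤ A - (1 - w) * a := by
    linarith [mul_le_mul_of_nonneg_left hab (sub_nonneg.2 hw1)]
  calc b / (A - (1 - w) * a) - w * b / (A - (1 - w) * b)
      ≤ b / (A - (1 - w) * a) - w * b / (A - (1 - w) * a) :=
        sub_le_sub_left (div_le_div_of_nonneg_left (mul_nonneg hw0 hb) hb' hden) _
    _ = (1 - w) * (b / (A - (1 - w) * a)) := by ring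

/-- Monotonicity properties of the marginal probabilities of the root vertex. -/
theorem marginal_monotonicity (q : ℕ) (hq : 2 ≤ q) (H : PCG q) (v : H.V)
    (w : ℝ) (hw : w ∈ Set.Icc (0 : ℝ) 1)
    (hZ1 : 0 < (H.addLeaf v ⟨0, by omega⟩).Zr w)
    (hZq : 0 < (H.addLeaf v ⟨q - 1, by omega⟩).Zr w) :
    (H.addLeaf v ⟨0, by omega⟩).Pr (some v) ⟨0, by omega⟩ w ≤
      (H.addLeaf v ⟨q - 1, by omega⟩).Pr (some v) ⟨0, by omega⟩ w ∧
    (H.addLeaf v ⟨q - 1, by omega⟩).Pr (some v) ⟨q - 1, by omega⟩ w ≤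
      (H.addLeaf v ⟨0, by omega⟩).Pr (some v) ⟨q - 1, by omega⟩ w ∧
    (H.Zcr v ⟨0, by omega⟩ w ≤ H.Zcr v ⟨q - 1, by omega⟩ w →
      (H.addLeaf v ⟨0, by omega⟩).Pr (some v) ⟨q - 1, by omega⟩ w -
        (H.addLeaf v ⟨q - 1, by omega⟩).Pr (some v) ⟨q - 1, by omega⟩ w ≤
      (1 - w) * (H.addLeaf v ⟨0, by omega⟩).Pr (some v) ⟨q - 1, by omega⟩ w) := by
  obtain ⟨hw0, hw1⟩ := hw
  have hne : (⟨0, by omega⟩ : Fin q) ≠ ⟨q - 1, by omega⟩ := by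
    rw [ne_eq, Fin.mk.injEq]
    omega
  rw [PCG.addLeaf_Zr] at hZ1 hZq
  simp only [PCG.addLeaf_Pr, if_true, if_neg hne, if_neg hne.symm, one_mul]
  refine ⟨mul_div_sub_le_div_sub hw0 hw1 (H.Zcr_nonneg v _ hw0) (H.Zcr_nonneg v _ hw0)
      (H.Zcr_le_Zr v _ hw0) hZ1 hZq,
    mul_div_sub_le_div_sub hw0 hw1 (H.Zcr_nonneg v _ hw0) (H.Zcr_nonneg v _ hw0)
      (H.Zcr_le_Zr v _ hw0) hZq hZ1,
    fun hle => div_sub_mul_div_le hw0 hw1 (H.Zcr_nonneg v _ hw0) hle hZq⟩
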